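/- arXiv:1601.05880 — 4 statements merged into one kernel-verified Lean document; each statement's English description precedes it below -/
import Mathlib

section
/- Product-distribution bound for β: for probability measures P_1, Q_1 on X and P_2, Q_2 on Y, and every α ∈ [0,1], β_α(P_1 × P_2, Q_1 × Q_2) ≥ β_{β_α(P_1,Q_1)}(P_2, Q_2). -/
open MeasureTheory

/-- Minimal type-II error over randomized (`[0,1]`-valued) tests with
type-I success probability at least `α`. -/
noncomputable def beta {W : Type*} [MeasurableSpace W] (α : ℝ) (P Q : MeasureTheory.Measure W) : ℝ :=
  sInf {b : ℝ | ∃ T : W → ℝ, Measurable T ∧ (∀ w, T w ∈ Set.Icc (0:ℝ) 1) ∧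
    α ≤ ∫ w, T w ∂P ∧ b = ∫ w, T w ∂Q}

lemma integrable_of_test {W : Type*} [MeasurableSpace W] {μ : Measure W} [IsFiniteMeasure μ]
    {T : W → ℝ} (hm : Measurable T) (h01 : ∀ w, T w ∈ Set.Icc (0:ℝ) 1) :
    Integrable T μ := by
  refine Integrable.mono' (integrable_const 1) hm.aestronglyMeasurable ?_
  filter_upwards with w
  rw [Real.norm_eq_abs, abs_le]
  exact ⟨le_trans (by norm_num) (h01 w).1, (h01 w).2⟩

lemma beta_bddBelow {W : Type*} [MeasurableSpace W] (α : ℝ) (P Q : Measure W) :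
    BddBelow {b : ℝ | ∃ T : W → ℝ, Measurable T ∧ (∀ w, T w ∈ Set.Icc (0:ℝ) 1) ∧
      α ≤ ∫ w, T w ∂P ∧ b = ∫ w, T w ∂Q} := by
  refine ⟨0, fun b hb => ?_⟩
  obtain ⟨T, _, h01, _, rfl⟩ := hb
  exact integral_nonneg fun w => (h01 w).1

/-- Product-distribution bound for the Neyman–Pearson β function. -/
theorem beta_prod {X Y : Type*} [MeasurableSpace X] [MeasurableSpace Y]
    (P₁ Q₁ : Measure X) (P₂ Q₂ : Measure Y)
    [IsProbabilityMeasure P₁] [IsProbabilityMeasure Q₁]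
    [IsProbabilityMeasure P₂] [IsProbabilityMeasure Q₂]
    (α : ℝ) (hα : α ∈ Set.Icc (0 : ℝ) 1) :
    beta (beta α P₁ Q₁) P₂ Q₂ ≤ beta α (P₁.prod P₂) (Q₁.prod Q₂) := by
  have hne : {b : ℝ | ∃ T : X × Y → ℝ, Measurable T ∧ (∀ w, T w ∈ Set.Icc (0:ℝ) 1) ∧
      α ≤ ∫ w, T w ∂(P₁.prod P₂) ∧ b = ∫ w, T w ∂(Q₁.prod Q₂)}.Nonempty := by
    refine ⟨∫ w, (fun _ => (1:ℝ)) w ∂(Q₁.prod Q₂), fun _ => 1, measurable_const,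
      fun w => ⟨zero_le_one, le_refl 1⟩, ?_, rfl⟩
    simp [hα.2]
  refine le_csInf hne ?_
  rintro b ⟨T, hTm, hT01, hTP, rfl⟩
  -- integrability facts
  have hTint : ∀ (μ : Measure X) (ν : Measure Y) [IsProbabilityMeasure μ]
      [IsProbabilityMeasure ν], Integrable T (μ.prod ν) := fun μ ν _ _ =>
    integrable_of_test hTm hT01
  -- f x = ∫ T(x,y) dP₂
  set f : X → ℝ := fun x => ∫ y, T (x, y) ∂P₂ with hf
  have hfm : Measurable f := by
    have := (hTm.stronglyMeasurable).integral_prod_right' (ν := P₂)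
    exact this.measurable
  have hf01 : ∀ x, f x ∈ Set.Icc (0:ℝ) 1 := by
    intro x
    constructor
    · exact integral_nonneg fun y => (hT01 (x, y)).1
    · calc ∫ y, T (x, y) ∂P₂ ≤ ∫ _, (1:ℝ) ∂P₂ := by
            refine integral_mono (integrable_of_test (hTm.comp (measurable_prodMk_left))
              (fun y => hT01 (x, y))) (integrable_const 1) (fun y => (hT01 (x, y)).2)
        _ = 1 := by simp
  have hfP : α ≤ ∫ x, f x ∂P₁ := by
    rw [hf]
    calc α ≤ ∫ w, T w ∂(P₁.prod P₂) := hTP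
      _ = ∫ x, ∫ y, T (x, y) ∂P₂ ∂P₁ := integral_prod T (hTint P₁ P₂)
  have hβ1 : beta α P₁ Q₁ ≤ ∫ x, f x ∂Q₁ :=
    csInf_le (beta_bddBelow α P₁ Q₁) ⟨f, hfm, hf01, hfP, rfl⟩
  -- g y = ∫ T(x,y) dQ₁
  set g : Y → ℝ := fun y => ∫ x, T (x, y) ∂Q₁ with hg
  have hgm : Measurable g := by
    have := (hTm.stronglyMeasurable).integral_prod_left' (μ := Q₁)
    exact this.measurable
  have hg01 : ∀ y, g y ∈ Set.Icc (0:ℝ) 1 := by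
    intro y
    constructor
    · exact integral_nonneg fun x => (hT01 (x, y)).1
    · calc ∫ x, T (x, y) ∂Q₁ ≤ ∫ _, (1:ℝ) ∂Q₁ := by
            refine integral_mono (integrable_of_test (hTm.comp (measurable_prodMk_right))
              (fun x => hT01 (x, y))) (integrable_const 1) (fun x => (hT01 (x, y)).2)
        _ = 1 := by simp
  have hswap : ∫ y, g y ∂P₂ = ∫ x, f x ∂Q₁ := by
    rw [hg, hf]
    rw [← integral_prod T (hTint Q₁ P₂), ← integral_prod_symm T (hTint Q₁ P₂)]
  have hgP : beta α P₁ Q₁ ≤ ∫ y, g y ∂P₂ := by rw [hswap]; exact hβ1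
  have hβ2 : beta (beta α P₁ Q₁) P₂ Q₂ ≤ ∫ y, g y ∂Q₂ :=
    csInf_le (beta_bddBelow _ P₂ Q₂) ⟨g, hgm, hg01, hgP, rfl⟩
  calc beta (beta α P₁ Q₁) P₂ Q₂ ≤ ∫ y, g y ∂Q₂ := hβ2
    _ = ∫ w, T w ∂(Q₁.prod Q₂) := (integral_prod_symm T (hTint Q₁ Q₂)).symm
end

section
/- Change-of-measure lower bound: for probability measures P_{XY} with marginals P_X, P_Y, an auxiliary distribution Q_Y, α ∈ (0,1), and δ_1 ∈ (0, 1−α), one has β_α(P_{XY}, P_X × P_Y) ≤ β_{α+δ_1}(P_{XY}, P_X × Q_Y) / β_{δ_1}(P_Y, Q_Y). -/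
open MeasureTheory
open scoped ENNReal

/-!
Let `c = β_{δ₁}(P_Y, Q_Y)` and let `A` be the set where the density `dP_Y/dQ_Y` exceeds `c⁻¹`.
On `A` we have `Q_Y < c P_Y`, so if `P_Y(A) > δ₁` the indicator of `A` would be a test of level
`δ₁` with type-II error `Q_Y(A) < c`; hence `P_Y(A) ≤ δ₁`. Switching a test `T` of level `α + δ₁`
off on `X × A` therefore loses at most `P_{XY}(X × A) = P_Y(A) ≤ δ₁` of power, and off `A` the
density bound gives `∫ T 1_{X × Aᶜ} d(P_X × P_Y) ≤ c⁻¹ ∫ T d(P_X × Q_Y)`.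
-/

lemma Set.indicator_mem_Icc {W : Type*} {T : W → ℝ} (hT01 : ∀ w, T w ∈ Set.Icc (0:ℝ) 1)
    (s : Set W) (w : W) : s.indicator T w ∈ Set.Icc (0:ℝ) 1 := by
  by_cases hw : w ∈ s
  · simpa [hw] using hT01 w
  · simp [hw]

section Tests

variable {W : Type*} [MeasurableSpace W] {μ P Q : Measure W} {α b : ℝ} {T : W → ℝ}

lemma beta_le_integral (hT : Measurable T) (hT01 : ∀ w, T w ∈ Set.Icc (0:ℝ) 1)
    (hTP : α ≤ ∫ w, T w ∂P) : beta α P Q ≤ ∫ w, T w ∂Q := by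
  refine csInf_le ⟨0, ?_⟩ ⟨T, hT, hT01, hTP, rfl⟩
  rintro b ⟨T, -, hT01, -, rfl⟩
  exact integral_nonneg fun w => (hT01 w).1

lemma le_beta [IsProbabilityMeasure P] (hα : α ≤ 1)
    (h : ∀ T : W → ℝ, Measurable T → (∀ w, T w ∈ Set.Icc (0:ℝ) 1) → α ≤ ∫ w, T w ∂P →
      b ≤ ∫ w, T w ∂Q) :
    b ≤ beta α P Q := by
  refine le_csInf ⟨_, fun _ => 1, measurable_const, fun _ => ⟨zero_le_one, le_rfl⟩, ?_, rfl⟩ ?_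
  · simpa using hα
  · rintro b ⟨T, hT, hT01, hTP, rfl⟩
    exact h T hT hT01 hTP

lemma integrable_of_mem_Icc [IsFiniteMeasure μ] (hT : Measurable T)
    (hT01 : ∀ w, T w ∈ Set.Icc (0:ℝ) 1) : Integrable T μ :=
  .of_bound hT.aestronglyMeasurable 1
    (ae_of_all _ fun w => (Real.norm_of_nonneg (hT01 w).1).trans_le (hT01 w).2)

lemma le_integral_indicator_compl [IsFiniteMeasure μ] {s : Set W} (hT : Measurable T)
    (hT01 : ∀ w, T w ∈ Set.Icc (0:ℝ) 1) (hs : MeasurableSet s)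
    (hTμ : α + μ.real s ≤ ∫ w, T w ∂μ) : α ≤ ∫ w, sᶜ.indicator T w ∂μ := by
  have hTs : ∫ w in s, T w ∂μ ≤ μ.real s := by
    simpa using (le_abs_self _).trans (norm_setIntegral_le_of_norm_le_const (measure_lt_top μ s)
      fun w _ => (Real.norm_of_nonneg (hT01 w).1).trans_le (hT01 w).2)
  rw [integral_indicator hs.compl]
  linarith [integral_add_compl hs (integrable_of_mem_Icc (μ := μ) hT hT01)]

end Tests

section RadonNikodym

variable {Y : Type*} [MeasurableSpace Y] {P Q : Measure Y}

lemma mul_measure_lt_of_lt_rnDeriv {s : Set Y} {r : ℝ≥0∞} (hs : MeasurableSet s)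
    (hQs : Q s ≠ 0) (hQs' : Q s ≠ ∞) (hr : r ≠ ∞) (h : ∀ y ∈ s, r < P.rnDeriv Q y) :
    r * Q s < P s :=
  calc r * Q s = ∫⁻ _ in s, r ∂Q := (setLIntegral_const s r).symm
    _ < ∫⁻ y in s, P.rnDeriv Q y ∂Q :=
      setLIntegral_strict_mono hs hQs (Measure.measurable_rnDeriv P Q)
        (by simpa using ENNReal.mul_ne_top hr hQs') (ae_of_all _ h)
    _ ≤ P s := Measure.setLIntegral_rnDeriv_le s

lemma lintegral_indicator_rnDeriv_le [P.HaveLebesgueDecomposition Q] (hPQ : P ≪ Q) (r : ℝ≥0∞)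
    {g : Y → ℝ≥0∞} (hg : Measurable g) :
    ∫⁻ y, {y | r < P.rnDeriv Q y}ᶜ.indicator g y ∂P ≤ r * ∫⁻ y, g y ∂Q := by
  have hs : MeasurableSet {y | r < P.rnDeriv Q y} :=
    Measure.measurable_rnDeriv P Q measurableSet_Ioi
  rw [← lintegral_rnDeriv_mul hPQ (hg.indicator hs.compl).aemeasurable,
    ← lintegral_const_mul _ hg]
  refine lintegral_mono fun y => ?_
  by_cases hy : r < P.rnDeriv Q y
  · simp [hy]
  · simpa [hy] using mul_le_mul_left (not_lt.mp hy) (g y)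

lemma lintegral_prod_indicator_rnDeriv_le {X : Type*} [MeasurableSpace X] (μ : Measure X)
    [SFinite μ] [SFinite P] [SFinite Q] [P.HaveLebesgueDecomposition Q] (hPQ : P ≪ Q)
    (r : ℝ≥0∞) {F : X × Y → ℝ≥0∞} (hF : Measurable F) :
    ∫⁻ p, (Prod.snd ⁻¹' {y | r < P.rnDeriv Q y}ᶜ).indicator F p ∂(μ.prod P) ≤
      r * ∫⁻ p, F p ∂(μ.prod Q) := by
  have hs : MeasurableSet (Prod.snd ⁻¹' {y | r < P.rnDeriv Q y}ᶜ : Set (X × Y)) :=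
    (Measure.measurable_rnDeriv P Q measurableSet_Ioi).compl.preimage measurable_snd
  rw [lintegral_prod _ (hF.indicator hs).aemeasurable, lintegral_prod _ hF.aemeasurable,
    ← lintegral_const_mul _ hF.lintegral_prod_right']
  exact lintegral_mono fun x =>
    lintegral_indicator_rnDeriv_le hPQ r (hF.comp measurable_prodMk_left)

lemma integral_prod_indicator_rnDeriv_le {X : Type*} [MeasurableSpace X] (μ : Measure X)
    [SFinite μ] [SFinite P] [SFinite Q] [P.HaveLebesgueDecomposition Q] (hPQ : P ≪ Q)
    {r : ℝ} (hr : 0 ≤ r) {T : X × Y → ℝ} (hT : Measurable T) (hT0 : 0 ≤ T)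
    (hTi : Integrable T (μ.prod Q)) :
    ∫ p, (Prod.snd ⁻¹' {y | ENNReal.ofReal r < P.rnDeriv Q y}ᶜ).indicator T p ∂(μ.prod P) ≤
      r * ∫ p, T p ∂(μ.prod Q) := by
  set s := Prod.snd ⁻¹' {y | ENNReal.ofReal r < P.rnDeriv Q y}ᶜ
  have hs : MeasurableSet s :=
    (Measure.measurable_rnDeriv P Q measurableSet_Ioi).compl.preimage measurable_snd
  have hofReal : (fun p => ENNReal.ofReal (s.indicator T p)) =
      s.indicator fun p => ENNReal.ofReal (T p) :=
    (Set.indicator_comp_of_zero ENNReal.ofReal_zero).symm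
  rw [integral_eq_lintegral_of_nonneg_ae (ae_of_all _ (Set.indicator_nonneg fun p _ => hT0 p))
      (hT.indicator hs).aestronglyMeasurable,
    integral_eq_lintegral_of_nonneg_ae (ae_of_all _ hT0) hT.aestronglyMeasurable, hofReal,
    ← ENNReal.toReal_ofReal hr, ← ENNReal.toReal_mul]
  exact ENNReal.toReal_mono (ENNReal.mul_ne_top ENNReal.ofReal_ne_top hTi.lintegral_lt_top.ne)
    (lintegral_prod_indicator_rnDeriv_le μ hPQ _ (ENNReal.measurable_ofReal.comp hT))

lemma measureReal_rnDeriv_gt_inv_beta_le [IsProbabilityMeasure P] [IsFiniteMeasure Q] {δ : ℝ}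
    (hβ : 0 < beta δ P Q) :
    P.real {y | ENNReal.ofReal (beta δ P Q)⁻¹ < P.rnDeriv Q y} ≤ δ := by
  set c := beta δ P Q
  set A := {y | ENNReal.ofReal c⁻¹ < P.rnDeriv Q y}
  have hA : MeasurableSet A := Measure.measurable_rnDeriv P Q measurableSet_Ioi
  by_contra! hPA
  have hcQ : c ≤ Q.real A := by
    have h := beta_le_integral (P := P) (Q := Q) (α := δ) (T := A.indicator 1)
      (measurable_one.indicator hA) (Set.indicator_mem_Icc (fun _ => ⟨zero_le_one, le_rfl⟩) A)
      (by rw [integral_indicator_one hA]; exact hPA.le)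
    rwa [integral_indicator_one hA] at h
  have hQA : Q A ≠ 0 := fun h0 => by simp [Measure.real, h0] at hcQ; linarith
  have hlt := mul_measure_lt_of_lt_rnDeriv hA hQA (measure_ne_top Q A) ENNReal.ofReal_ne_top
    fun _ hy => hy
  have : c⁻¹ * Q.real A < 1 := by
    have := ENNReal.toReal_strict_mono (measure_ne_top P A) hlt
    rw [ENNReal.toReal_mul, ENNReal.toReal_ofReal (inv_nonneg.mpr hβ.le)] at this
    exact this.trans_le measureReal_le_one
  linarith [(inv_mul_lt_iff₀ hβ).mp this]

end RadonNikodym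

theorem beta_change_of_measure_ub_general {X Y : Type*} [MeasurableSpace X] [MeasurableSpace Y]
    (PXY : Measure (X × Y)) [IsProbabilityMeasure PXY]
    (PX : Measure X) (PY QY : Measure Y) [IsProbabilityMeasure QY]
    (hPX : PX = PXY.map Prod.fst) (hPY : PY = PXY.map Prod.snd)
    (α δ₁ : ℝ) (hδ : δ₁ ∈ Set.Ioo (0 : ℝ) (1 - α))
    (hac : PY ≪ QY) (hpos : 0 < beta δ₁ PY QY) :
    beta α PXY (PX.prod PY) ≤ beta (α + δ₁) PXY (PX.prod QY) / beta δ₁ PY QY := by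
  have : IsProbabilityMeasure PX :=
    hPX ▸ Measure.isProbabilityMeasure_map measurable_fst.aemeasurable
  have : IsProbabilityMeasure PY :=
    hPY ▸ Measure.isProbabilityMeasure_map measurable_snd.aemeasurable
  set c := beta δ₁ PY QY
  set A := {y | ENNReal.ofReal c⁻¹ < PY.rnDeriv QY y}
  have hA : MeasurableSet A := Measure.measurable_rnDeriv PY QY measurableSet_Ioi
  have hXA : MeasurableSet (Prod.snd ⁻¹' A : Set (X × Y)) := hA.preimage measurable_snd
  have hPA : PXY.real (Prod.snd ⁻¹' A) ≤ δ₁ := by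
    rw [← map_measureReal_apply measurable_snd hA, ← hPY]
    exact measureReal_rnDeriv_gt_inv_beta_le hpos
  rw [le_div_iff₀ hpos]
  refine le_beta (by linarith [hδ.2]) fun T hT hT01 hTP => ?_
  have hT'P : α ≤ ∫ p, (Prod.snd ⁻¹' A)ᶜ.indicator T p ∂PXY :=
    le_integral_indicator_compl hT hT01 hXA (by linarith)
  calc beta α PXY (PX.prod PY) * c
      ≤ (∫ p, (Prod.snd ⁻¹' A)ᶜ.indicator T p ∂(PX.prod PY)) * c := by
        gcongr
        exact beta_le_integral (hT.indicator hXA.compl) (Set.indicator_mem_Icc hT01 _) hT'P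
    _ ≤ (c⁻¹ * ∫ p, T p ∂(PX.prod QY)) * c := by
        gcongr
        exact integral_prod_indicator_rnDeriv_le PX hac (inv_nonneg.mpr hpos.le) hT
          (fun p => (hT01 p).1) (integrable_of_mem_Icc hT hT01)
    _ = ∫ p, T p ∂(PX.prod QY) := by field_simp

/-- Change-of-measure lower bound:
`β_α(P_XY, P_X × P_Y) ≤ β_{α+δ₁}(P_XY, P_X × Q_Y) / β_{δ₁}(P_Y, Q_Y)`. -/
theorem beta_change_of_measure_ub {X Y : Type*} [MeasurableSpace X] [MeasurableSpace Y]
    (PXY : Measure (X × Y)) [IsProbabilityMeasure PXY]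
    (PX : Measure X) (PY QY : Measure Y) [IsProbabilityMeasure QY]
    (hPX : PX = PXY.map Prod.fst) (hPY : PY = PXY.map Prod.snd)
    (α δ₁ : ℝ) (hα : α ∈ Set.Ioo (0 : ℝ) 1) (hδ : δ₁ ∈ Set.Ioo (0 : ℝ) (1 - α))
    (hac : PY ≪ QY) (hpos : 0 < beta δ₁ PY QY) :
    beta α PXY (PX.prod PY) ≤ beta (α + δ₁) PXY (PX.prod QY) / beta δ₁ PY QY :=
  beta_change_of_measure_ub_general PXY PX PY QY hPX hPY α δ₁ hδ hac hpos
end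

section
/- Rényi-divergence lower bound on β: for probability measures P, Q, every α ∈ (0,1), and every λ > 1, β_α(P,Q) ≥ α^{λ/(λ−1)} · ( exp((λ−1) D_λ(P||Q)) − (1−α)^λ )^{−1/(λ−1)}, where D_λ is the Rényi divergence of order λ. -/
/-!
Write `r = dP/dQ` and rescale a test `T` so that `∫ T dP = α`. Hölder's inequality for the
measure `T • Q` gives `α ^ λ = (∫ T r dQ) ^ λ ≤ (∫ T dQ) ^ (λ - 1) * ∫ T r ^ λ dQ`, and for the
measure `(1 - T) • Q` it gives `(1 - α) ^ λ ≤ ∫ (1 - T) r ^ λ dQ = exp ((λ - 1) D) - ∫ T r ^ λ dQ`.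
Eliminating `∫ T r ^ λ dQ` bounds `∫ T dQ` from below.
-/

open MeasureTheory

theorem rpow_integral_mul_le {X : Type*} [MeasurableSpace X] {μ : Measure X} {p : ℝ}
    (hp : 1 < p) {w f : X → ℝ} (hw : 0 ≤ w) (hf : 0 ≤ f) (hw_int : Integrable w μ)
    (hf_meas : AEStronglyMeasurable f μ) (hwf_int : Integrable (fun x => w x * f x ^ p) μ) :
    (∫ x, w x * f x ∂μ) ^ p ≤ (∫ x, w x ∂μ) ^ (p - 1) * ∫ x, w x * f x ^ p ∂μ := by
  set q := p.conjExponent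
  have hpq : p.HolderConjugate q := .conjExponent hp
  have hp0 : 0 < p := hpq.pos
  have hq0 : 0 < q := hpq.symm.pos
  -- split `w * f = w ^ (1/q) * (w ^ (1/p) * f)` and apply Hölder to the two factors
  have hfactor : ∀ x, w x * f x = w x ^ q⁻¹ * (w x ^ p⁻¹ * f x) := fun x => by
    rw [← mul_assoc, ← Real.rpow_add' (hw x) (by simp [hpq.symm.inv_add_inv_eq_one]),
      hpq.symm.inv_add_inv_eq_one, Real.rpow_one]
  have hwq_pow : ∀ x, (w x ^ q⁻¹) ^ q = w x := fun x => by
    rw [← Real.rpow_mul (hw x), inv_mul_cancel₀ hq0.ne', Real.rpow_one]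
  have hwf_pow : ∀ x, (w x ^ p⁻¹ * f x) ^ p = w x * f x ^ p := fun x => by
    rw [Real.mul_rpow (Real.rpow_nonneg (hw x) _) (hf x), ← Real.rpow_mul (hw x),
      inv_mul_cancel₀ hp0.ne', Real.rpow_one]
  have hw_pow_meas {s : ℝ} : AEStronglyMeasurable (fun x => w x ^ s) μ :=
    (hw_int.aemeasurable.pow_const s).aestronglyMeasurable
  have hwq_mem : MemLp (fun x => w x ^ q⁻¹) (ENNReal.ofReal q) μ := by
    refine (integrable_norm_rpow_iff hw_pow_meas (by simpa using hq0) ENNReal.ofReal_ne_top).mp ?_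
    simpa only [ENNReal.toReal_ofReal hq0.le, Real.norm_of_nonneg (Real.rpow_nonneg (hw _) _),
      hwq_pow] using hw_int
  have hwf_mem : MemLp (fun x => w x ^ p⁻¹ * f x) (ENNReal.ofReal p) μ := by
    refine (integrable_norm_rpow_iff (hw_pow_meas.mul hf_meas) (by simpa using hp0)
      ENNReal.ofReal_ne_top).mp ?_
    simpa only [ENNReal.toReal_ofReal hp0.le, Pi.mul_apply,
      Real.norm_of_nonneg (mul_nonneg (Real.rpow_nonneg (hw _) _) (hf _)), hwf_pow]
      using hwf_int
  have holder := integral_mul_le_Lp_mul_Lq_of_nonneg hpq.symm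
    (.of_forall fun x => Real.rpow_nonneg (hw x) _)
    (.of_forall fun x => mul_nonneg (Real.rpow_nonneg (hw x) _) (hf x)) hwq_mem hwf_mem
  simp only [hwq_pow, hwf_pow, ← hfactor, one_div] at holder
  have hI : 0 ≤ ∫ x, w x * f x ∂μ := integral_nonneg fun x => mul_nonneg (hw x) (hf x)
  have hJ : 0 ≤ ∫ x, w x * f x ^ p ∂μ :=
    integral_nonneg fun x => mul_nonneg (hw x) (Real.rpow_nonneg (hf x) _)
  calc (∫ x, w x * f x ∂μ) ^ p
      ≤ ((∫ x, w x ∂μ) ^ q⁻¹ * (∫ x, w x * f x ^ p ∂μ) ^ p⁻¹) ^ p :=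
        Real.rpow_le_rpow hI holder hp0.le
    _ = (∫ x, w x ∂μ) ^ (p - 1) * ∫ x, w x * f x ^ p ∂μ := by
        rw [Real.mul_rpow (Real.rpow_nonneg (integral_nonneg hw) _) (Real.rpow_nonneg hJ _),
          ← Real.rpow_mul (integral_nonneg hw), ← Real.rpow_mul hJ, inv_mul_cancel₀ hp0.ne',
          Real.rpow_one, ← div_eq_inv_mul, hpq.div_conj_eq_sub_one]

theorem rpow_div_mul_rpow_neg_le_of_rpow_le {a b c lam : ℝ} (ha : 0 ≤ a) (hb : 0 ≤ b)
    (hc : 0 < c) (hlam : 1 < lam) (h : a ^ lam ≤ b ^ (lam - 1) * c) :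
    a ^ (lam / (lam - 1)) * c ^ (-(1 : ℝ) / (lam - 1)) ≤ b := by
  have hlam' : 0 < lam - 1 := sub_pos.2 hlam
  calc a ^ (lam / (lam - 1)) * c ^ (-(1 : ℝ) / (lam - 1))
      = (a ^ lam / c) ^ (lam - 1)⁻¹ := by
        rw [Real.div_rpow (by positivity) hc.le, ← Real.rpow_mul ha, div_eq_mul_inv,
          neg_div, Real.rpow_neg hc.le, one_div, div_eq_mul_inv]
    _ ≤ (b ^ (lam - 1)) ^ (lam - 1)⁻¹ := by
        gcongr
        exact (div_le_iff₀ hc).2 h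
    _ = b := Real.rpow_rpow_inv hb hlam'.ne'

section Tests

variable {W : Type*} [MeasurableSpace W] {P Q : Measure W} {T : W → ℝ}

theorem exists_test_integral_eq {α : ℝ} (hα : 0 < α) (hT : Measurable T)
    (hT01 : ∀ w, T w ∈ Set.Icc (0 : ℝ) 1) (hTα : α ≤ ∫ w, T w ∂P) :
    ∃ S : W → ℝ, Measurable S ∧ (∀ w, S w ∈ Set.Icc (0 : ℝ) 1) ∧
      ∫ w, S w ∂P = α ∧ ∫ w, S w ∂Q ≤ ∫ w, T w ∂Q := by
  have ha : 0 < ∫ w, T w ∂P := hα.trans_le hTα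
  have hs : α / ∫ w, T w ∂P ∈ Set.Icc (0 : ℝ) 1 := ⟨by positivity, (div_le_one ha).2 hTα⟩
  refine ⟨fun w => α / (∫ w, T w ∂P) * T w, measurable_const.mul hT,
    fun w => ⟨mul_nonneg hs.1 (hT01 w).1, mul_le_one₀ hs.2 (hT01 w).1 (hT01 w).2⟩, ?_, ?_⟩
  · rw [integral_const_mul, div_mul_cancel₀ _ ha.ne']
  · rw [integral_const_mul]
    exact mul_le_of_le_one_left (integral_nonneg fun w => (hT01 w).1) hs.2

theorem rpow_integral_le_of_mem_Icc [IsProbabilityMeasure P] [IsProbabilityMeasure Q]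
    (hac : P ≪ Q) {lam : ℝ} (hlam : 1 < lam)
    (hfin : Integrable (fun w => ((P.rnDeriv Q w).toReal) ^ lam) Q)
    (hT : Measurable T) (hT01 : ∀ w, T w ∈ Set.Icc (0 : ℝ) 1) :
    (∫ w, T w ∂P) ^ lam ≤ (∫ w, T w ∂Q) ^ (lam - 1) *
      (∫ w, ((P.rnDeriv Q w).toReal) ^ lam ∂Q - (1 - ∫ w, T w ∂P) ^ lam) := by
  set r : W → ℝ := fun w => (P.rnDeriv Q w).toReal
  have hr0 : 0 ≤ r := fun w => ENNReal.toReal_nonneg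
  have hr_meas : AEStronglyMeasurable r Q :=
    (Measure.measurable_rnDeriv P Q).ennreal_toReal.aestronglyMeasurable
  have hT_int {μ : Measure W} [IsFiniteMeasure μ] : Integrable T μ :=
    .of_mem_Icc 0 1 hT.aemeasurable (.of_forall hT01)
  have holder {S : W → ℝ} (hS : Measurable S) (hS01 : ∀ w, S w ∈ Set.Icc (0 : ℝ) 1) :
      Integrable (fun w => S w * r w ^ lam) Q ∧
      (∫ w, S w ∂P) ^ lam ≤ (∫ w, S w ∂Q) ^ (lam - 1) * ∫ w, S w * r w ^ lam ∂Q := by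
    have hP : ∫ w, S w ∂P = ∫ w, S w * r w ∂Q := by
      simp_rw [mul_comm (S _)]; exact (integral_toReal_rnDeriv_mul hac).symm
    have hint : Integrable (fun w => S w * r w ^ lam) Q :=
      hfin.bdd_mul hS.aestronglyMeasurable (.of_forall fun w => by
        rw [Real.norm_of_nonneg (hS01 w).1]; exact (hS01 w).2)
    exact ⟨hint, hP ▸ rpow_integral_mul_le hlam (fun w => (hS01 w).1) hr0
      (.of_mem_Icc 0 1 hS.aemeasurable (.of_forall hS01)) hr_meas hint⟩
  have hT1_01 (w : W) : 1 - T w ∈ Set.Icc (0 : ℝ) 1 :=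
    ⟨sub_nonneg.2 (hT01 w).2, sub_le_self _ (hT01 w).1⟩
  obtain ⟨hTr_int, hT_bound⟩ := holder hT hT01
  obtain ⟨-, hT1_bound⟩ := holder (measurable_const.sub hT) hT1_01
  have hT1P : ∫ w, (1 - T w) ∂P = 1 - ∫ w, T w ∂P := by
    rw [integral_sub (integrable_const 1) hT_int]; simp
  have hT1Q : (∫ w, (1 - T w) ∂Q) ^ (lam - 1) ≤ 1 := by
    refine Real.rpow_le_one (integral_nonneg fun w => (hT1_01 w).1) ?_ (by linarith)
    rw [integral_sub (integrable_const 1) hT_int]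
    simpa using integral_nonneg fun w => (hT01 w).1
  have hT1r_nonneg : 0 ≤ ∫ w, (1 - T w) * r w ^ lam ∂Q :=
    integral_nonneg fun w => mul_nonneg (hT1_01 w).1 (Real.rpow_nonneg (hr0 w) _)
  have hcompl : (1 - ∫ w, T w ∂P) ^ lam ≤ ∫ w, (1 - T w) * r w ^ lam ∂Q :=
    hT1P ▸ hT1_bound.trans (mul_le_of_le_one_left hT1r_nonneg hT1Q)
  have hsplit :
      ∫ w, (1 - T w) * r w ^ lam ∂Q = ∫ w, r w ^ lam ∂Q - ∫ w, T w * r w ^ lam ∂Q := by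
    simp_rw [sub_mul, one_mul]; exact integral_sub hfin hTr_int
  have hTQ : 0 ≤ ∫ w, T w ∂Q := integral_nonneg fun w => (hT01 w).1
  calc (∫ w, T w ∂P) ^ lam ≤ (∫ w, T w ∂Q) ^ (lam - 1) * ∫ w, T w * r w ^ lam ∂Q := hT_bound
    _ ≤ _ := by gcongr; linarith

theorem one_le_integral_rnDeriv_rpow [IsProbabilityMeasure P] [IsProbabilityMeasure Q]
    (hac : P ≪ Q) {lam : ℝ} (hlam : 1 < lam)
    (hfin : Integrable (fun w => ((P.rnDeriv Q w).toReal) ^ lam) Q) :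
    1 ≤ ∫ w, ((P.rnDeriv Q w).toReal) ^ lam ∂Q := by
  simpa [Real.zero_rpow (by linarith : lam ≠ 0)] using
    rpow_integral_le_of_mem_Icc hac hlam hfin (T := fun _ => 1) measurable_const
      (fun _ => by simp)

end Tests

/-- Rényi-divergence lower bound on the Neyman–Pearson β function. -/
theorem beta_renyi_lb {W : Type*} [MeasurableSpace W]
    (P Q : Measure W) [IsProbabilityMeasure P] [IsProbabilityMeasure Q]
    (hac : P ≪ Q) (α lam : ℝ) (hα : α ∈ Set.Ioo (0 : ℝ) 1) (hlam : 1 < lam)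
    (hfin : Integrable (fun w => ((P.rnDeriv Q w).toReal) ^ lam) Q)
    (D : ℝ) (hD : D = (1 / (lam - 1)) * Real.log (∫ w, ((P.rnDeriv Q w).toReal) ^ lam ∂Q))
    (hgt : (1 - α) ^ lam < Real.exp ((lam - 1) * D)) :
    α ^ (lam / (lam - 1)) * (Real.exp ((lam - 1) * D) - (1 - α) ^ lam) ^ (-(1 : ℝ) / (lam - 1))
      ≤ beta α P Q := by
  obtain ⟨hα0, hα1⟩ := hα
  have hM := one_le_integral_rnDeriv_rpow hac hlam hfin
  have hexp : Real.exp ((lam - 1) * D) = ∫ w, ((P.rnDeriv Q w).toReal) ^ lam ∂Q := by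
    rw [hD, ← mul_assoc, mul_one_div_cancel (sub_pos.2 hlam).ne', one_mul,
      Real.exp_log (by linarith)]
  rw [hexp] at hgt ⊢
  refine le_csInf ⟨_, fun _ => 1, measurable_const, fun _ => by simp, by simp [hα1.le], rfl⟩ ?_
  rintro _ ⟨T, hT, hT01, hTα, rfl⟩
  obtain ⟨S, hS, hS01, hSP, hSQ⟩ := exists_test_integral_eq (Q := Q) hα0 hT hT01 hTα
  have hbound := rpow_integral_le_of_mem_Icc hac hlam hfin hS hS01
  rw [hSP] at hbound
  exact (rpow_div_mul_rpow_neg_le_of_rpow_le hα0.le (integral_nonneg fun w => (hS01 w).1)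
    (sub_pos.2 hgt) hlam hbound).trans hSQ
end

section
/- Chi-square lower tail bound used: if L_n ∼ χ²_{2n}(0) (central chi-square with 2n degrees of freedom) and γ̃ ≥ 2n, then log P[L_n ≥ γ̃] ≥ −(1/2)[ (γ̃ − 2n) log e + (2n−2) log(γ̃/(2n)) + log(2n) ] − log 2. -/
open MeasureTheory

/-- Density of the (central) chi-square distribution with `k` degrees of freedom. -/
noncomputable def chiSqPDF (k : ℕ) (t : ℝ) : ℝ :=
  if 0 < t then
    t ^ ((k : ℝ) / 2 - 1) * Real.exp (-t / 2) / (2 ^ ((k : ℝ) / 2) * Real.Gamma ((k : ℝ) / 2))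
  else 0

/-- Density of the noncentral chi-square distribution with `k` degrees of freedom and
noncentrality parameter `lam`, written as a Poisson mixture of central chi-square densities. -/
noncomputable def ncChiSqPDF (k : ℕ) (lam : ℝ) (t : ℝ) : ℝ :=
  ∑' j : ℕ, (Real.exp (-lam / 2) * (lam / 2) ^ j / j.factorial) * chiSqPDF (k + 2 * j) t

/-!
On `(γ, ∞)` the density `t ^ (n - 1) e ^ (-t/2) / (2 ^ n Γ(n))` of `χ²_{2n}` is at least
`γ ^ (n - 1) e ^ (-t/2) / (2 ^ n Γ(n))`, whose integral is `e ^ (-γ/2) (γ/2) ^ (n - 1) / Γ(n)`.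
Since the Stirling sequence `n! / (√(2n) (n/e) ^ n)` decreases from its value `e / √2` at `1`,
`log Γ(n) ≤ (n - 1/2) log n - n + 1`, and the claimed bound follows because `γ ≥ 2n` and
`(3/2) log 2 > 1`.
-/

open Real Set
open scoped Nat

lemma Stirling.log_factorial_le_stirling {n : ℕ} (hn : n ≠ 0) :
    log n ! ≤ n * log n - n + log n / 2 + 1 := by
  obtain ⟨m, rfl⟩ := Nat.exists_eq_succ_of_ne_zero hn
  have h := Stirling.log_stirlingSeq'_antitone (Nat.zero_le m)
  simp only [Function.comp_apply, Stirling.stirlingSeq_one, Stirling.log_stirlingSeq_formula] at h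
  have hm : (0 : ℝ) < (m + 1 : ℕ) := by positivity
  rw [log_div (exp_ne_zero 1) (by positivity), log_exp, log_sqrt zero_le_two,
    log_mul two_ne_zero hm.ne', log_div hm.ne' (exp_ne_zero 1), log_exp] at h
  linarith

lemma Real.log_Gamma_natCast_le {n : ℕ} (hn : n ≠ 0) :
    log (Gamma n) ≤ (n - 1 / 2) * log n - n + 1 := by
  obtain ⟨m, rfl⟩ := Nat.exists_eq_succ_of_ne_zero hn
  have hm : (0 : ℝ) < (m + 1 : ℕ) := by positivity
  have hfac : ((m + 1)! : ℝ) = (m + 1 : ℕ) * Gamma (m + 1 : ℕ) := by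
    rw [Nat.factorial_succ, Nat.cast_mul, Nat.cast_succ, Gamma_nat_eq_factorial]
  have := Stirling.log_factorial_le_stirling hn
  rw [hfac, log_mul hm.ne' (Gamma_pos_of_pos hm).ne'] at this
  linarith

lemma chiSqPDF_of_pos (k : ℕ) {t : ℝ} (ht : 0 < t) :
    chiSqPDF k t =
      t ^ ((k : ℝ) / 2 - 1) * exp (-t / 2) / (2 ^ ((k : ℝ) / 2) * Gamma ((k : ℝ) / 2)) :=
  if_pos ht

lemma integrableOn_chiSqPDF_Ioi {k : ℕ} (hk : k ≠ 0) {γ : ℝ} (hγ : 0 ≤ γ) :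
    IntegrableOn (chiSqPDF k) (Ioi γ) := by
  have hs : -1 < (k : ℝ) / 2 - 1 := by
    have : (0 : ℝ) < k := by positivity
    linarith
  have h := (integrableOn_rpow_mul_exp_neg_mul_rpow hs one_pos one_half_pos).mono_set
    (Ioi_subset_Ioi hγ)
  refine IntegrableOn.congr_fun (h.div_const (2 ^ ((k : ℝ) / 2) * Gamma ((k : ℝ) / 2)))
    (fun t ht => ?_) measurableSet_Ioi
  rw [chiSqPDF_of_pos k (hγ.trans_lt ht), rpow_one, neg_mul, neg_div, one_div, inv_mul_eq_div]

lemma integral_Ioi_exp_neg_half (γ : ℝ) : ∫ t in Ioi γ, exp (-t / 2) = 2 * exp (-γ / 2) := by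
  have h := integral_exp_mul_Ioi (a := -(1 / 2)) (by norm_num) γ
  simp only [neg_mul, one_div, inv_mul_eq_div, ← neg_div] at h
  rw [h]
  field_simp

lemma le_setIntegral_Ioi_chiSqPDF {k : ℕ} (hk : 2 ≤ k) {γ : ℝ} (hγ : 0 < γ) :
    2 * γ ^ ((k : ℝ) / 2 - 1) * exp (-γ / 2) / (2 ^ ((k : ℝ) / 2) * Gamma ((k : ℝ) / 2)) ≤
      ∫ t in Ioi γ, chiSqPDF k t := by
  set ν : ℝ := (k : ℝ) / 2
  set C : ℝ := 2 ^ ν * Gamma ν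
  have hν : 1 ≤ ν := by
    have : (2 : ℝ) ≤ k := by exact_mod_cast hk
    simp only [ν]; linarith
  have hC : 0 < C := by positivity [Gamma_pos_of_pos (by linarith : (0 : ℝ) < ν)]
  have hminorant : ∀ t ∈ Ioi γ, γ ^ (ν - 1) / C * exp (-t / 2) ≤ chiSqPDF k t := by
    intro t ht
    rw [chiSqPDF_of_pos k (hγ.trans ht), div_mul_eq_mul_div]
    gcongr ?_ * _ / _
    exact rpow_le_rpow hγ.le (mem_Ioi.mp ht).le (by linarith)
  have hexp : IntegrableOn (fun t => exp (-t / 2)) (Ioi γ) :=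
    .of_integral_ne_zero (by rw [integral_Ioi_exp_neg_half]; positivity)
  calc 2 * γ ^ (ν - 1) * exp (-γ / 2) / C
      = ∫ t in Ioi γ, γ ^ (ν - 1) / C * exp (-t / 2) := by
        rw [integral_const_mul, integral_Ioi_exp_neg_half]; ring
    _ ≤ ∫ t in Ioi γ, chiSqPDF k t :=
        setIntegral_mono_on (hexp.const_mul _)
          (integrableOn_chiSqPDF_Ioi (by omega) hγ.le) measurableSet_Ioi hminorant

/-- Chi-square lower tail bound: for `L_n ∼ χ²_{2n}(0)` and `γ̃ ≥ 2n`,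
`log P[L_n ≥ γ̃] ≥ −(1/2)[(γ̃ − 2n) + (2n−2) log(γ̃/(2n)) + log(2n)] − log 2`
(natural logarithms, so `log e = 1`). -/
theorem chiSq_tail_lb (n : ℕ) (hn : 0 < n) (γ : ℝ) (hγ : (2 * n : ℝ) ≤ γ) :
    -(1 / 2) * ((γ - 2 * n) + (2 * (n : ℝ) - 2) * Real.log (γ / (2 * n)) + Real.log (2 * n))
        - Real.log 2
      ≤ Real.log (∫ t in Set.Ioi γ, chiSqPDF (2 * n) t) := by
  have hn1 : (1 : ℝ) ≤ n := by exact_mod_cast hn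
  have hγ0 : 0 < γ := by linarith
  have hΓ : 0 < Gamma n := Gamma_pos_of_pos (by positivity)
  have htail := le_setIntegral_Ioi_chiSqPDF (k := 2 * n) (by omega) hγ0
  rw [show ((2 * n : ℕ) : ℝ) / 2 = n by push_cast; ring] at htail
  refine le_trans ?_ (log_le_log (by positivity) htail)
  set L := log (γ / (2 * n)) with hL_def
  have hlog2n : log (2 * n) = log 2 + log n := log_mul two_ne_zero (by positivity)
  have hlogγ : log γ = L + log 2 + log n := by
    rw [hL_def, log_div hγ0.ne' (by positivity), hlog2n]; ring
  have hlogA : log (2 * γ ^ ((n : ℝ) - 1) * exp (-γ / 2) / (2 ^ (n : ℝ) * Gamma n)) =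
      log 2 + (n - 1) * (L + log 2 + log n) - γ / 2 - (n * log 2 + log (Gamma n)) := by
    rw [log_div (by positivity) (by positivity), log_mul (by positivity) (by positivity),
      log_mul (by positivity) (by positivity), log_mul (by positivity) hΓ.ne',
      log_rpow hγ0, log_rpow two_pos, log_exp, hlogγ]
    ring
  have hL : 0 ≤ (n - 1) * L :=
    mul_nonneg (by linarith) (log_nonneg ((one_le_div (by positivity)).mpr hγ))
  have hΓle := log_Gamma_natCast_le hn.ne'
  have hlog2 := log_two_gt_d9
  -- the remaining slack is `2 (n - 1) L + (3/2) log 2 - 1 ≥ 0`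
  rw [hlogA, hlog2n]
  linarith
end
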